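/- For every real β ≥ 1: (even case) for every integer k ≥ 0 one has α(2k−1) < s(2k, β); (odd case) for every integer k ≥ 0 such that β·(H(2k) − 1) < H(2k) + 1, one has α(2k) < s(2k+1, β). -/

import Mathlib

/-- Pell numbers: P 0 = 0, P 1 = 1, P (m+2) = 2·P (m+1) + P m. -/
def pell : ℕ → ℕ
  | 0 => 0
  | 1 => 1
  | m + 2 => 2 * pell (m + 1) + pell m

/-- Half-companion Pell numbers: H 0 = 1, H 1 = 1, H (m+2) = 2·H (m+1) + H m. -/
def hpell : ℕ → ℕ
  | 0 => 1
  | 1 => 1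
  | m + 2 => 2 * hpell (m + 1) + hpell m

/-- For m ≥ -1, γ(m, β): for even m = 2k, γ = H(2k+2)/((β+1)·P(2k+1)); for odd
m = 2k−1, γ = 2·P(2k+1)/((β+1)·H(2k) − (β−1)).  (In particular γ(−1, β) = 1.) -/
noncomputable def gam (m : ℤ) (β : ℝ) : ℝ :=
  if m % 2 = 0 then
    (hpell (m + 2).toNat : ℝ) / ((β + 1) * (pell (m + 1).toNat : ℝ))
  else
    2 * (pell (m + 2).toNat : ℝ) / ((β + 1) * (hpell (m + 1).toNat : ℝ) - (β - 1))

/-- α(2k) = H(2k+2)/H(2k), α(2k−1) = P(2k+1)/P(2k−1) for k ≥ 1, α(−1) = 1. -/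
noncomputable def al (m : ℤ) : ℝ :=
  if m = -1 then 1
  else if m % 2 = 0 then (hpell (m + 2).toNat : ℝ) / (hpell m.toNat : ℝ)
  else (pell (m + 2).toNat : ℝ) / (pell m.toNat : ℝ)

/-- s(m, β) = γ(m−1, β)·α(m)/γ(m, β). -/
noncomputable def sfun (m : ℤ) (β : ℝ) : ℝ := gam (m - 1) β * al m / gam m β

/-
Since `H (n+1) + P (n+1) √2 = (H n + P n √2) (1 + √2)`, the norm identity
`H n ^ 2 - 2 P n ^ 2 = (-1) ^ n` holds, together with its Cassini-type companions
`2 P n P (n+2) = H (n+1) ^ 2 - (-1) ^ n` and `H n H (n+2) = H (n+1) ^ 2 + 2 (-1) ^ n`.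
After clearing denominators, these identities reduce the even case to `(1 - β) H (2k) < β + 1`,
automatic for `β ≥ 1`, and the odd case to `(β - 1) H (2k) < β + 1`, which is its hypothesis.
-/

theorem pell_add_one_and_hpell_add_one :
    ∀ n : ℕ, pell (n + 1) = pell n + hpell n ∧ hpell (n + 1) = 2 * pell n + hpell n
  | 0 => by simp [pell, hpell]
  | n + 1 => by
    obtain ⟨hp, hh⟩ := pell_add_one_and_hpell_add_one n
    simp only [pell, hpell]
    omega

theorem pell_add_one (n : ℕ) : pell (n + 1) = pell n + hpell n :=
  (pell_add_one_and_hpell_add_one n).1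

theorem hpell_add_one (n : ℕ) : hpell (n + 1) = 2 * pell n + hpell n :=
  (pell_add_one_and_hpell_add_one n).2

theorem hpell_pos : ∀ n : ℕ, 0 < hpell n
  | 0 => Nat.one_pos
  | n + 1 => by rw [hpell_add_one]; exact Nat.add_pos_right _ (hpell_pos n)

theorem pell_add_one_pos (n : ℕ) : 0 < pell (n + 1) := by
  rw [pell_add_one]
  exact Nat.add_pos_right _ (hpell_pos n)

section Identities

variable (R : Type*) [CommRing R]

theorem hpell_sq_sub_two_mul_pell_sq (n : ℕ) :
    (hpell n : R) ^ 2 - 2 * (pell n : R) ^ 2 = (-1) ^ n := by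
  induction n with
  | zero => simp [pell, hpell]
  | succ n ih =>
    rw [pell_add_one, hpell_add_one, pow_succ]
    push_cast
    linear_combination -ih

theorem two_mul_pell_mul_pell_add_two (n : ℕ) :
    2 * (pell n : R) * pell (n + 2) = (hpell (n + 1) : R) ^ 2 - (-1) ^ n := by
  rw [pell_add_one, pell_add_one, hpell_add_one]
  push_cast
  linear_combination -hpell_sq_sub_two_mul_pell_sq R n

theorem hpell_mul_hpell_add_two (n : ℕ) :
    (hpell n : R) * hpell (n + 2) = (hpell (n + 1) : R) ^ 2 + 2 * (-1) ^ n := by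
  rw [hpell_add_one, pell_add_one, hpell_add_one]
  push_cast
  linear_combination 2 * hpell_sq_sub_two_mul_pell_sq R n

end Identities

theorem gam_two_mul (β : ℝ) (k : ℕ) :
    gam (2 * k) β = hpell (2 * k + 2) / ((β + 1) * pell (2 * k + 1)) := by
  rw [gam, if_pos (by omega), show (2 * (k : ℤ) + 2).toNat = 2 * k + 2 by omega,
    show (2 * (k : ℤ) + 1).toNat = 2 * k + 1 by omega]

theorem gam_two_mul_sub_one (β : ℝ) (k : ℕ) :
    gam (2 * k - 1) β = 2 * pell (2 * k + 1) / ((β + 1) * hpell (2 * k) - (β - 1)) := by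
  rw [gam, if_neg (by omega), show (2 * (k : ℤ) - 1 + 2).toNat = 2 * k + 1 by omega,
    show (2 * (k : ℤ) - 1 + 1).toNat = 2 * k by omega]

theorem gam_two_mul_add_one (β : ℝ) (k : ℕ) :
    gam (2 * k + 1) β = 2 * pell (2 * k + 3) / ((β + 1) * hpell (2 * k + 2) - (β - 1)) := by
  rw [gam, if_neg (by omega), show (2 * (k : ℤ) + 1 + 2).toNat = 2 * k + 3 by omega,
    show (2 * (k : ℤ) + 1 + 1).toNat = 2 * k + 2 by omega]

theorem al_two_mul (k : ℕ) : al (2 * k) = hpell (2 * k + 2) / hpell (2 * k) := by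
  rw [al, if_neg (by omega), if_pos (by omega), show (2 * (k : ℤ) + 2).toNat = 2 * k + 2 by omega,
    show (2 * (k : ℤ)).toNat = 2 * k by omega]

theorem al_two_mul_add_one (k : ℕ) : al (2 * k + 1) = pell (2 * k + 3) / pell (2 * k + 1) := by
  rw [al, if_neg (by omega), if_neg (by omega), show (2 * (k : ℤ) + 1 + 2).toNat = 2 * k + 3 by omega,
    show (2 * (k : ℤ) + 1).toNat = 2 * k + 1 by omega]

theorem sfun_two_mul (β : ℝ) (k : ℕ) :
    sfun (2 * k) β = 2 * (β + 1) * pell (2 * k + 1) ^ 2 /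
      (hpell (2 * k) * ((β + 1) * hpell (2 * k) - (β - 1))) := by
  have : (hpell (2 * k + 2) : ℝ) ≠ 0 := by positivity [hpell_pos (2 * k + 2)]
  rw [sfun, gam_two_mul_sub_one, al_two_mul, gam_two_mul]
  field_simp

theorem sfun_two_mul_add_one (β : ℝ) (k : ℕ) :
    sfun (2 * k + 1) β = hpell (2 * k + 2) * ((β + 1) * hpell (2 * k + 2) - (β - 1)) /
      (2 * (β + 1) * pell (2 * k + 1) ^ 2) := by
  have : (pell (2 * k + 3) : ℝ) ≠ 0 := by positivity [pell_add_one_pos (2 * k + 2)]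
  rw [sfun, add_sub_cancel_right, gam_two_mul, al_two_mul_add_one, gam_two_mul_add_one]
  field_simp

theorem al_two_mul_sub_one_lt_sfun_two_mul {β : ℝ} (hβ : 1 ≤ β) :
    ∀ k : ℕ, al (2 * k - 1) < sfun (2 * k) β
  | 0 => by
    rw [sfun_two_mul]
    norm_num [al, pell, hpell]
    linarith
  | j + 1 => by
    have hq : 0 < (pell (2 * j + 1) : ℝ) := mod_cast pell_add_one_pos (2 * j)
    have hp : 0 < (pell (2 * j + 3) : ℝ) := mod_cast pell_add_one_pos (2 * j + 2)
    have hh : 1 ≤ (hpell (2 * j + 2) : ℝ) := mod_cast hpell_pos (2 * j + 2)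
    have hD : 0 < (β + 1) * hpell (2 * j + 2) - (β - 1) := by nlinarith
    have hcassini : 2 * (pell (2 * j + 1) : ℝ) * pell (2 * j + 3) = hpell (2 * j + 2) ^ 2 + 1 := by
      have := two_mul_pell_mul_pell_add_two ℝ (2 * j + 1)
      rwa [Odd.neg_one_pow ⟨j, rfl⟩, sub_neg_eq_add] at this
    have hslack : 0 < (pell (2 * j + 3) : ℝ) * ((β + 1) + (β - 1) * hpell (2 * j + 2)) :=
      mul_pos hp (by nlinarith)
    rw [show 2 * ((j + 1 : ℕ) : ℤ) - 1 = 2 * j + 1 by push_cast; ring, al_two_mul_add_one,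
      sfun_two_mul, show 2 * (j + 1) + 1 = 2 * j + 3 by ring, show 2 * (j + 1) = 2 * j + 2 by ring,
      div_lt_div_iff₀ hq (by positivity)]
    linear_combination hslack - (β + 1) * (pell (2 * j + 3) : ℝ) * hcassini

theorem al_two_mul_lt_sfun_two_mul_add_one {β : ℝ} (hβ : -1 < β) (k : ℕ)
    (hk : β * ((hpell (2 * k) : ℝ) - 1) < hpell (2 * k) + 1) :
    al (2 * k) < sfun (2 * k + 1) β := by
  have hq : 0 < (pell (2 * k + 1) : ℝ) := mod_cast pell_add_one_pos (2 * k)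
  have hh : 0 < (hpell (2 * k) : ℝ) := mod_cast hpell_pos (2 * k)
  have hh₂ : 0 < (hpell (2 * k + 2) : ℝ) := mod_cast hpell_pos (2 * k + 2)
  have hnorm : (hpell (2 * k + 1) : ℝ) ^ 2 - 2 * (pell (2 * k + 1) : ℝ) ^ 2 = -1 := by
    rw [hpell_sq_sub_two_mul_pell_sq, Odd.neg_one_pow ⟨k, rfl⟩]
  have hcassini : (hpell (2 * k) : ℝ) * hpell (2 * k + 2) = hpell (2 * k + 1) ^ 2 + 2 := by
    rw [hpell_mul_hpell_add_two, Even.neg_one_pow ⟨k, by ring⟩, mul_one]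
  have hslack : 0 < (hpell (2 * k + 2) : ℝ) * ((β + 1) - (β - 1) * hpell (2 * k)) :=
    mul_pos hh₂ (by linarith)
  have hden : 0 < 2 * (β + 1) * (pell (2 * k + 1) : ℝ) ^ 2 := by
    have : 0 < β + 1 := by linarith
    positivity
  rw [al_two_mul, sfun_two_mul_add_one, div_lt_div_iff₀ hh hden]
  linear_combination hslack - (β + 1) * (hpell (2 * k + 2) : ℝ) * (hcassini + hnorm)

theorem stmt_5 (β : ℝ) (hβ : 1 ≤ β) :
    (∀ k : ℕ, al (2*(k:ℤ)-1) < sfun (2*(k:ℤ)) β) ∧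
    (∀ k : ℕ, β * ((hpell (2*k) : ℝ) - 1) < (hpell (2*k) : ℝ) + 1 →
      al (2*(k:ℤ)) < sfun (2*(k:ℤ)+1) β) :=
  ⟨al_two_mul_sub_one_lt_sfun_two_mul hβ,
    al_two_mul_lt_sfun_two_mul_add_one (by linarith)⟩
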